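/- arXiv:1210.5607 — 2 statements merged into one kernel-verified Lean document; each statement's English description precedes it below -/
import Mathlib

section
/- Let v_1 v_2 v_3 v_4 be a path on 4 distinct vertices in a graph G, k ≥ 1, and let c be a nonrepetitive coloring of G[E_k]. Then either the color sets c[v_1[E_k]], c[v_2[E_k]], c[v_3[E_k]] of the first three layers are pairwise disjoint, or the color sets c[v_2[E_k]], c[v_3[E_k]], c[v_4[E_k]] of the last three layers are pairwise disjoint. In particular, if all four layers are rainbow colored, then c uses at least 3k colors. -/
/-- The lexicographic product `G[H]` of two simple graphs. -/
def lexProd {V W : Type*} (G : SimpleGraph V) (H : SimpleGraph W) : SimpleGraph (V × W) where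
  Adj x y := G.Adj x.1 y.1 ∨ (x.1 = y.1 ∧ H.Adj x.2 y.2)
  symm := by
    constructor
    rintro ⟨a, b⟩ ⟨a', b'⟩ (h | ⟨h1, h2⟩)
    · exact Or.inl h.symm
    · exact Or.inr ⟨h1.symm, h2.symm⟩
  loopless := by
    constructor
    rintro ⟨a, b⟩ (h | ⟨_, h2⟩)
    · exact G.loopless.irrefl a h
    · exact H.loopless.irrefl b h2

/-- A coloring `c` of a graph `G` is nonrepetitive if there is no path
`v₁ v₂ … v_{2l}` (pairwise distinct vertices, consecutive ones adjacent) with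
`c vᵢ = c v_{l+i}` for all `1 ≤ i ≤ l`. -/
def IsNonrepetitive {V α : Type*} (G : SimpleGraph V) (c : V → α) : Prop :=
  ∀ l : ℕ, 0 < l → ∀ f : ℕ → V,
    (∀ i j, i < 2 * l → j < 2 * l → f i = f j → i = j) →
    (∀ i, i + 1 < 2 * l → G.Adj (f i) (f (i + 1))) →
    ¬ (∀ i, i < l → c (f i) = c (f (i + l)))

/-- The Thue chromatic number: least number of colors in a nonrepetitive coloring. -/
noncomputable def thueNumber {V : Type*} (G : SimpleGraph V) : ℕ :=
  sInf {n : ℕ | ∃ c : V → Fin n, IsNonrepetitive G c}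

/-- The rainbow Thue chromatic number of `G[H]`: least number of colors in a
nonrepetitive coloring of `G[H]` in which every layer is rainbow colored. -/
noncomputable def rainbowThueNumber {V W : Type*} (G : SimpleGraph V) (H : SimpleGraph W) : ℕ :=
  sInf {n : ℕ | ∃ c : V × W → Fin n, IsNonrepetitive (lexProd G H) c ∧
    ∀ v : V, Function.Injective fun w : W => c (v, w)}

/-- The set of colors used by `c` on the layer `v[H]`. -/
def layerColors {V W α : Type*} (c : V × W → α) (v : V) : Set α :=
  Set.range fun w : W => c (v, w)

/-!
An edge `uv` of `G` makes every vertex of the layer `u[H]` adjacent to every vertex of `v[H]`,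
so a color shared by two adjacent layers would be a repetition of length 2. If the layers of
`v₁, v₃` shared a color `a` and those of `v₂, v₄` a color `b`, the four vertices carrying them
would form a path colored `a b a b`. Hence one of the triples `v₁ v₂ v₃`, `v₂ v₃ v₄` has pairwise
color-disjoint layers, and if these are rainbow they contribute `k` colors each.
-/

namespace IsNonrepetitive

variable {V α : Type*} {G : SimpleGraph V} {c : V → α}

theorem map_take_ne_drop (hc : IsNonrepetitive G c) {p : List V} {l : ℕ} (hl : 0 < l)
    (hlen : p.length = 2 * l) (hnd : p.Nodup) (hp : p.IsChain G.Adj) :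
    (p.map c).take l ≠ (p.map c).drop l := by
  intro hrep
  have h0 : 0 < p.length := by omega
  have hget : ∀ i (hi : i < p.length), p.getD i p[0] = p[i] := fun i hi =>
    List.getD_eq_getElem _ _ hi
  refine hc l hl (fun i => p.getD i p[0]) (fun i j hi hj hij => ?_) (fun i hi => ?_) fun i hi => ?_
  · rwa [hget i (by omega), hget j (by omega), hnd.getElem_inj_iff] at hij
  · rw [hget i (by omega), hget (i + 1) (by omega)]
    exact hp.getElem i (by omega)
  · have := congrArg (·[i]?) hrep
    simp only [List.getElem?_take, List.getElem?_drop, List.getElem?_map] at this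
    rw [hget i (by omega), hget (i + l) (by omega)]
    simpa [hi, List.getElem?_eq_getElem (show i < p.length by omega),
      List.getElem?_eq_getElem (show l + i < p.length by omega), Nat.add_comm] using this

theorem ne_of_adj (hc : IsNonrepetitive G c) {x y : V} (hxy : G.Adj x y) : c x ≠ c y := by
  intro h
  refine hc.map_take_ne_drop (p := [x, y]) one_pos rfl (by simp [hxy.ne]) (by simpa) ?_
  simp only [List.map_cons, List.map_nil, h]
  rfl

theorem not_square_of_path (hc : IsNonrepetitive G c) {x₁ x₂ x₃ x₄ : V}
    (hp : [x₁, x₂, x₃, x₄].Nodup) (h₁₂ : G.Adj x₁ x₂) (h₂₃ : G.Adj x₂ x₃) (h₃₄ : G.Adj x₃ x₄) :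
    ¬ (c x₁ = c x₃ ∧ c x₂ = c x₄) := by
  rintro ⟨h₁₃, h₂₄⟩
  refine hc.map_take_ne_drop two_pos rfl hp (by simp [h₁₂, h₂₃, h₃₄]) ?_
  simp only [List.map_cons, List.map_nil, h₁₃, h₂₄]
  rfl

end IsNonrepetitive

theorem lexProd_adj_of_adj {V W : Type*} {G : SimpleGraph V} (H : SimpleGraph W) {u v : V}
    (huv : G.Adj u v) (w w' : W) : (lexProd G H).Adj (u, w) (v, w') :=
  Or.inl huv

section Layers

variable {V W α : Type*} {G : SimpleGraph V} {H : SimpleGraph W} {c : V × W → α}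

theorem IsNonrepetitive.disjoint_layerColors_of_adj (hc : IsNonrepetitive (lexProd G H) c)
    {u v : V} (huv : G.Adj u v) : Disjoint (layerColors c u) (layerColors c v) := by
  rw [Set.disjoint_left]
  rintro _ ⟨w, rfl⟩ ⟨w', hw'⟩
  exact hc.ne_of_adj (lexProd_adj_of_adj H huv w w') hw'.symm

theorem IsNonrepetitive.disjoint_layerColors_or (hc : IsNonrepetitive (lexProd G H) c)
    {v₁ v₂ v₃ v₄ : V} (hv : [v₁, v₂, v₃, v₄].Nodup)
    (h₁₂ : G.Adj v₁ v₂) (h₂₃ : G.Adj v₂ v₃) (h₃₄ : G.Adj v₃ v₄) :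
    Disjoint (layerColors c v₁) (layerColors c v₃) ∨
      Disjoint (layerColors c v₂) (layerColors c v₄) := by
  by_contra! h
  obtain ⟨⟨_, ⟨w₁, hw₁⟩, ⟨w₃, hw₃⟩⟩, ⟨_, ⟨w₂, hw₂⟩, ⟨w₄, hw₄⟩⟩⟩ :=
    And.imp Set.not_disjoint_iff.mp Set.not_disjoint_iff.mp h
  refine hc.not_square_of_path (x₁ := (v₁, w₁)) (x₂ := (v₂, w₂)) (x₃ := (v₃, w₃)) (x₄ := (v₄, w₄))
    ?_ (lexProd_adj_of_adj H h₁₂ _ _) (lexProd_adj_of_adj H h₂₃ _ _)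
    (lexProd_adj_of_adj H h₃₄ _ _) ⟨hw₁.trans hw₃.symm, hw₂.trans hw₄.symm⟩
  simp only [List.nodup_cons, List.mem_cons, List.not_mem_nil, or_false] at hv ⊢
  simp_all [Prod.ext_iff]

theorem exists_finset_coe_eq_layerColors [Fintype W] {v : V}
    (hv : Function.Injective fun w : W => c (v, w)) :
    ∃ s : Finset α, ↑s = layerColors c v ∧ s.card = Fintype.card W := by
  classical
  exact ⟨Finset.univ.image fun w => c (v, w), by simp [layerColors],
    Finset.card_image_of_injective _ hv⟩

theorem layerColors_subset_range (v : V) : layerColors c v ⊆ Set.range c :=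
  Set.range_comp_subset_range _ c

theorem exists_finset_three_mul_card_le [Fintype W] {u v w : V}
    (hu : Function.Injective fun x : W => c (u, x)) (hv : Function.Injective fun x : W => c (v, x))
    (hw : Function.Injective fun x : W => c (w, x))
    (huv : Disjoint (layerColors c u) (layerColors c v))
    (huw : Disjoint (layerColors c u) (layerColors c w))
    (hvw : Disjoint (layerColors c v) (layerColors c w)) :
    ∃ S : Finset α, ↑S ⊆ Set.range c ∧ 3 * Fintype.card W ≤ S.card := by
  classical
  obtain ⟨s, hs, hs_card⟩ := exists_finset_coe_eq_layerColors hu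
  obtain ⟨t, ht, ht_card⟩ := exists_finset_coe_eq_layerColors hv
  obtain ⟨r, hr, hr_card⟩ := exists_finset_coe_eq_layerColors hw
  rw [← hs, ← ht, Finset.disjoint_coe] at huv
  rw [← hs, ← hr, Finset.disjoint_coe] at huw
  rw [← ht, ← hr, Finset.disjoint_coe] at hvw
  refine ⟨s ∪ t ∪ r, ?_, ?_⟩
  · simp only [Finset.coe_union, hs, ht, hr, Set.union_subset_iff]
    exact ⟨⟨layerColors_subset_range u, layerColors_subset_range v⟩, layerColors_subset_range w⟩
  · rw [Finset.card_union_of_disjoint (Finset.disjoint_union_left.mpr ⟨huw, hvw⟩),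
      Finset.card_union_of_disjoint huv]
    omega

end Layers

theorem stmt_5_general {V α : Type*} (G : SimpleGraph V) (k : ℕ)
    (c : V × Fin k → α)
    (hnr : IsNonrepetitive (lexProd G (⊥ : SimpleGraph (Fin k))) c)
    (v₁ v₂ v₃ v₄ : V) (hdist : [v₁, v₂, v₃, v₄].Pairwise Ne)
    (h12 : G.Adj v₁ v₂) (h23 : G.Adj v₂ v₃) (h34 : G.Adj v₃ v₄) :
    ((Disjoint (layerColors c v₁) (layerColors c v₂) ∧
      Disjoint (layerColors c v₁) (layerColors c v₃) ∧
      Disjoint (layerColors c v₂) (layerColors c v₃)) ∨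
     (Disjoint (layerColors c v₂) (layerColors c v₃) ∧
      Disjoint (layerColors c v₂) (layerColors c v₄) ∧
      Disjoint (layerColors c v₃) (layerColors c v₄))) ∧
    ((∀ v ∈ [v₁, v₂, v₃, v₄], Function.Injective fun w : Fin k => c (v, w)) →
      ∃ S : Finset α, ↑S ⊆ Set.range c ∧ 3 * k ≤ S.card) := by
  have hdisj {u v : V} (huv : G.Adj u v) := hnr.disjoint_layerColors_of_adj huv
  rcases hnr.disjoint_layerColors_or hdist h12 h23 h34 with h13 | h24
  · refine ⟨Or.inl ⟨hdisj h12, h13, hdisj h23⟩, fun hinj => ?_⟩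
    simpa using exists_finset_three_mul_card_le (hinj v₁ (by simp)) (hinj v₂ (by simp))
      (hinj v₃ (by simp)) (hdisj h12) h13 (hdisj h23)
  · refine ⟨Or.inr ⟨hdisj h23, h24, hdisj h34⟩, fun hinj => ?_⟩
    simpa using exists_finset_three_mul_card_le (hinj v₂ (by simp)) (hinj v₃ (by simp))
      (hinj v₄ (by simp)) (hdisj h23) h24 (hdisj h34)

/-- If `v₁v₂v₃v₄` is a path on 4 distinct vertices of `G` and `c` is a nonrepetitive
coloring of `G[E_k]`, then either the color sets of the first three layers are pairwise
disjoint or the color sets of the last three layers are pairwise disjoint; moreover if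
all four layers are rainbow colored then `c` uses at least `3k` colors. -/
theorem stmt_5 {V α : Type*} (G : SimpleGraph V) (k : ℕ) (hk : 1 ≤ k)
    (c : V × Fin k → α)
    (hnr : IsNonrepetitive (lexProd G (⊥ : SimpleGraph (Fin k))) c)
    (v₁ v₂ v₃ v₄ : V) (hdist : [v₁, v₂, v₃, v₄].Pairwise Ne)
    (h12 : G.Adj v₁ v₂) (h23 : G.Adj v₂ v₃) (h34 : G.Adj v₃ v₄) :
    ((Disjoint (layerColors c v₁) (layerColors c v₂) ∧
      Disjoint (layerColors c v₁) (layerColors c v₃) ∧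
      Disjoint (layerColors c v₂) (layerColors c v₃)) ∨
     (Disjoint (layerColors c v₂) (layerColors c v₃) ∧
      Disjoint (layerColors c v₂) (layerColors c v₄) ∧
      Disjoint (layerColors c v₃) (layerColors c v₄))) ∧
    ((∀ v ∈ [v₁, v₂, v₃, v₄], Function.Injective fun w : Fin k => c (v, w)) →
      ∃ S : Finset α, ↑S ⊆ Set.range c ∧ 3 * k ≤ S.card) :=
  stmt_5_general G k c hnr v₁ v₂ v₃ v₄ hdist h12 h23 h34
end

section
/- For every k ≥ 1, every rainbow nonrepetitive coloring of T_{3,6}[E_k] uses at least 4k colors, where T_{3,6} is the rooted tree in which the root has 3 children, every other non-leaf vertex has degree 3 (i.e., 2 children), and all leaves are at distance 5 from the root. -/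
open SimpleGraph Function

section

variable {V W α : Type*}

def LayersMeet (c : V × W → α) (u v : V) : Prop :=
  ∃ a b : W, c (u, a) = c (v, b)

def LayersMeetAmongFour (c : V × W → α) : Prop :=
  ∀ v₁ v₂ v₃ v₄ : V, LayersMeet c v₁ v₂ ∨ LayersMeet c v₁ v₃ ∨ LayersMeet c v₁ v₄ ∨
    LayersMeet c v₂ v₃ ∨ LayersMeet c v₂ v₄ ∨ LayersMeet c v₃ v₄

theorem layersMeetAmongFour_of_card_lt [Fintype W] {c : V × W → α}
    (hrainbow : ∀ v, Injective fun w => c (v, w))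
    (hcard : ∀ S : Finset α, ↑S ⊆ Set.range c → S.card < 4 * Fintype.card W) :
    LayersMeetAmongFour c := by
  classical
  intro v₁ v₂ v₃ v₄
  by_contra! h
  obtain ⟨h₁₂, h₁₃, h₁₄, h₂₃, h₂₄, h₃₄⟩ := h
  let layer (v : V) : Finset α := Finset.univ.image fun w => c (v, w)
  have hlayer : ∀ v, (layer v).card = Fintype.card W := fun v =>
    Finset.card_image_of_injective _ (hrainbow v)
  have hdisj : ∀ {u v}, ¬ LayersMeet c u v → Disjoint (layer u) (layer v) := by
    intro u v huv
    simp only [layer, Finset.disjoint_left, Finset.mem_image, Finset.mem_univ, true_and]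
    rintro _ ⟨a, rfl⟩ ⟨b, hb⟩
    exact huv ⟨a, b, hb.symm⟩
  refine (hcard ((layer v₁ ∪ layer v₂) ∪ (layer v₃ ∪ layer v₄)) ?_).ne' ?_
  · intro x hx
    simp only [layer, Finset.coe_union, Finset.coe_image, Finset.coe_univ, Set.image_univ,
      Set.mem_union, Set.mem_range] at hx
    rcases hx with ((⟨w, hw⟩ | ⟨w, hw⟩) | (⟨w, hw⟩ | ⟨w, hw⟩)) <;> exact ⟨_, hw⟩
  · rw [Finset.card_union_of_disjoint (Finset.disjoint_union_left.2
        ⟨Finset.disjoint_union_right.2 ⟨hdisj h₁₃, hdisj h₁₄⟩,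
          Finset.disjoint_union_right.2 ⟨hdisj h₂₃, hdisj h₂₄⟩⟩),
      Finset.card_union_of_disjoint (hdisj h₁₂), Finset.card_union_of_disjoint (hdisj h₃₄)]
    simp only [hlayer]
    ring

section Nonrepetitive

variable {G : SimpleGraph V} {H : SimpleGraph W} {c : V × W → α}

/-- Choosing the shared colors in the layers lifts `p` to a repetitively colored path of `G[H]`. -/
theorem IsNonrepetitive.not_forall_layersMeet (hc : IsNonrepetitive (lexProd G H) c)
    {u v : V} {p : G.Walk u v} (hp : p.IsPath) {l : ℕ} (hl : 0 < l)
    (hlen : p.length + 1 = 2 * l) :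
    ¬ ∀ i < l, LayersMeet c (p.getVert i) (p.getVert (i + l)) := by
  intro h
  obtain ⟨w₀, -⟩ := h 0 hl
  have : ∀ i, ∃ a b : W, i < l → c (p.getVert i, a) = c (p.getVert (i + l), b) := fun i =>
    if hi : i < l then (h i hi).imp fun _ => Exists.imp fun _ hab _ => hab
    else ⟨w₀, w₀, fun h => absurd h hi⟩
  choose a b hab using this
  refine hc l hl (fun i => (p.getVert i, if i < l then a i else b (i - l))) ?_ ?_ ?_
  · intro i j hi hj hij
    exact hp.getVert_injOn (by simp; omega) (by simp; omega) (congrArg Prod.fst hij)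
  · intro i hi
    exact Or.inl (p.adj_getVert_succ (by omega))
  · intro i hi
    simpa [hi] using hab i hi

theorem IsNonrepetitive.not_layersMeet_of_adj (hc : IsNonrepetitive (lexProd G H) c)
    {u v : V} (h : G.Adj u v) : ¬ LayersMeet c u v := by
  intro huv
  refine hc.not_forall_layersMeet (p := .cons h .nil) ?_ one_pos rfl ?_
  · simp [h.ne]
  · intro i hi
    obtain rfl : i = 0 := by omega
    exact huv

theorem IsNonrepetitive.not_layersMeet_and_layersMeet (hG : G.IsAcyclic)
    (hc : IsNonrepetitive (lexProd G H) c) {v₀ v₁ v₂ v₃ : V}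
    (h₀₁ : G.Adj v₀ v₁) (h₁₂ : G.Adj v₁ v₂) (h₂₃ : G.Adj v₂ v₃) (h₀₂ : v₀ ≠ v₂) (h₁₃ : v₁ ≠ v₃) :
    ¬ (LayersMeet c v₀ v₂ ∧ LayersMeet c v₁ v₃) := by
  rintro ⟨hm₀, hm₁⟩
  refine hc.not_forall_layersMeet (p := .cons h₀₁ (.cons h₁₂ (.cons h₂₃ .nil))) ?_ two_pos rfl ?_
  · rw [hG.isPath_iff_isChain]
    simp [h₀₁.ne, h₁₂.ne, h₀₂, h₁₃]
  · intro i hi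
    interval_cases i <;> simpa

theorem IsNonrepetitive.not_layersMeet_and_layersMeet_and_layersMeet (hG : G.IsAcyclic)
    (hc : IsNonrepetitive (lexProd G H) c) {v₀ v₁ v₂ v₃ v₄ v₅ : V}
    (h₀₁ : G.Adj v₀ v₁) (h₁₂ : G.Adj v₁ v₂) (h₂₃ : G.Adj v₂ v₃) (h₃₄ : G.Adj v₃ v₄)
    (h₄₅ : G.Adj v₄ v₅) (h₀₂ : v₀ ≠ v₂) (h₁₃ : v₁ ≠ v₃) (h₂₄ : v₂ ≠ v₄) (h₃₅ : v₃ ≠ v₅) :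
    ¬ (LayersMeet c v₀ v₃ ∧ LayersMeet c v₁ v₄ ∧ LayersMeet c v₂ v₅) := by
  rintro ⟨hm₀, hm₁, hm₂⟩
  refine hc.not_forall_layersMeet
    (p := .cons h₀₁ (.cons h₁₂ (.cons h₂₃ (.cons h₃₄ (.cons h₄₅ .nil))))) ?_ three_pos rfl ?_
  · rw [hG.isPath_iff_isChain]
    simp [h₀₁.ne, h₁₂.ne, h₂₃.ne, h₃₄.ne, h₀₂, h₁₃, h₂₄, h₃₅]
  · intro i hi
    interval_cases i <;> simpa

end Nonrepetitive

section RootedTree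

variable {T : SimpleGraph V} {r : V}

structure IsChild (T : SimpleGraph V) (r p v : V) : Prop where
  adj : T.Adj p v
  dist_eq : T.dist r v = T.dist r p + 1

theorem IsChild.ne_root {p v : V} (h : IsChild T r p v) : v ≠ r := by
  rintro rfl
  simpa using h.dist_eq

theorem IsChild.ne_of_isChild {p v w : V} (hv : IsChild T r p v) (hw : IsChild T r v w) :
    p ≠ w := by
  rintro rfl
  have := hv.dist_eq
  have := hw.dist_eq
  omega

theorem isChild_root_of_adj {v : V} (h : T.Adj r v) : IsChild T r r v :=
  ⟨h, by simp [dist_eq_one_iff_adj.2 h]⟩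

theorem SimpleGraph.IsTree.eq_of_adj_of_dist_add_one_eq (hT : T.IsTree) {u v x : V}
    (hu : T.Adj u x) (hv : T.Adj v x)
    (hdu : T.dist r u + 1 = T.dist r x) (hdv : T.dist r v + 1 = T.dist r x) : u = v := by
  classical
  obtain ⟨P, hP⟩ := (hT.connected r x).exists_isPath
  -- a shortest path to a parent of `x` avoids `x`, so extends to the unique path to `x`
  have hpen : ∀ w, T.Adj w x → T.dist r w + 1 = T.dist r x → w = P.penultimate := by
    intro w hw hdw
    obtain ⟨q, hq, hql⟩ := (hT.connected r w).exists_path_of_dist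
    have hx : x ∉ q.support := fun hx => by
      have := dist_le (q.takeUntil x hx)
      have := q.length_takeUntil_le_length hx
      omega
    exact hT.isAcyclic.eq_penultimate_of_adj_end hP hw.symm
      (hT.isAcyclic.mem_support_of_ne_mem_support_of_adj_of_isPath hP hq hw.symm hx)
  rw [hpen u hu hdu, hpen v hv hdv]

theorem SimpleGraph.IsTree.isChild_of_adj (hT : T.IsTree) {p v x : V} (hv : IsChild T r p v)
    (hx : T.Adj v x) (hxp : x ≠ p) : IsChild T r v x := by
  refine ⟨hx, (hT.dist_eq_dist_add_one_of_adj r hx).resolve_left fun h => hxp ?_⟩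
  exact hT.eq_of_adj_of_dist_add_one_eq hx.symm hv.adj h.symm hv.dist_eq.symm

theorem SimpleGraph.IsTree.exists_two_children (hT : T.IsTree) {p v : V}
    [Fintype (T.neighborSet v)] (hv : IsChild T r p v) (hdeg : T.degree v = 3) :
    ∃ a b, a ≠ b ∧ IsChild T r v a ∧ IsChild T r v b := by
  classical
  have hcard : ((T.neighborFinset v).erase p).card = 2 := by
    rw [Finset.card_erase_of_mem ((mem_neighborFinset _ _ _).2 hv.adj.symm),
      card_neighborFinset_eq_degree, hdeg]
  obtain ⟨a, b, hab, hpair⟩ := Finset.card_eq_two.1 hcard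
  have hchild : ∀ x ∈ (T.neighborFinset v).erase p, IsChild T r v x := fun x hx =>
    let ⟨hxp, hx⟩ := Finset.mem_erase.1 hx
    hT.isChild_of_adj hv ((mem_neighborFinset _ _ _).1 hx) hxp
  exact ⟨a, b, hab, hchild a (by simp [hpair]), hchild b (by simp [hpair])⟩

end RootedTree

section MeetingSiblings

variable {T : SimpleGraph V} {r : V} {H : SimpleGraph W} {c : V × W → α}

structure MeetingSiblings (T : SimpleGraph V) (r : V) (c : V × W → α) (p s v : V) : Prop where
  ne : s ≠ v
  isChild_left : IsChild T r p s
  isChild_right : IsChild T r p v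
  layersMeet : LayersMeet c s v

theorem exists_meetingSiblings_root [Fintype (T.neighborSet r)]
    (hc : IsNonrepetitive (lexProd T H) c) (h4 : LayersMeetAmongFour c) (hdeg : T.degree r = 3) :
    ∃ s v, MeetingSiblings T r c r s v := by
  classical
  rw [← card_neighborFinset_eq_degree, Finset.card_eq_three] at hdeg
  obtain ⟨x₀, x₁, x₂, h₀₁, h₀₂, h₁₂, hnbr⟩ := hdeg
  have hadj : ∀ x ∈ ({x₀, x₁, x₂} : Finset V), T.Adj r x := fun x hx =>
    (mem_neighborFinset _ _ _).1 (hnbr ▸ hx)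
  have hchild : ∀ x ∈ ({x₀, x₁, x₂} : Finset V), IsChild T r r x := fun x hx =>
    isChild_root_of_adj (hadj x hx)
  rcases h4 r x₀ x₁ x₂ with h | h | h | h | h | h
  · exact (hc.not_layersMeet_of_adj (hadj x₀ (by simp)) h).elim
  · exact (hc.not_layersMeet_of_adj (hadj x₁ (by simp)) h).elim
  · exact (hc.not_layersMeet_of_adj (hadj x₂ (by simp)) h).elim
  · exact ⟨x₀, x₁, h₀₁, hchild x₀ (by simp), hchild x₁ (by simp), h⟩
  · exact ⟨x₀, x₂, h₀₂, hchild x₀ (by simp), hchild x₂ (by simp), h⟩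
  · exact ⟨x₁, x₂, h₁₂, hchild x₁ (by simp), hchild x₂ (by simp), h⟩

theorem MeetingSiblings.exists_meetingSiblings (hT : T.IsTree)
    (hc : IsNonrepetitive (lexProd T H) c) (h4 : LayersMeetAmongFour c) {p s v : V}
    [Fintype (T.neighborSet v)] (h : MeetingSiblings T r c p s v) (hdeg : T.degree v = 3) :
    ∃ s' v', MeetingSiblings T r c v s' v' := by
  obtain ⟨hsv, hs, hv, hmeet⟩ := h
  obtain ⟨a, b, hab, ha, hb⟩ := hT.exists_two_children hv hdeg
  have hp : ∀ {x}, IsChild T r v x → ¬ LayersMeet c p x := fun hx hpx =>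
    hc.not_layersMeet_and_layersMeet hT.isAcyclic hs.adj.symm hv.adj hx.adj hsv
      (hv.ne_of_isChild hx) ⟨hmeet, hpx⟩
  rcases h4 p v a b with h | h | h | h | h | h
  · exact (hc.not_layersMeet_of_adj hv.adj h).elim
  · exact (hp ha h).elim
  · exact (hp hb h).elim
  · exact (hc.not_layersMeet_of_adj ha.adj h).elim
  · exact (hc.not_layersMeet_of_adj hb.adj h).elim
  · exact ⟨a, b, hab, ha, hb, h⟩

theorem MeetingSiblings.layersMeet_of_meetingSiblings (hT : T.IsTree)
    (hc : IsNonrepetitive (lexProd T H) c) (h4 : LayersMeetAmongFour c) {u₀ u₁ u₂ u₃ s t : V}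
    (h₁ : MeetingSiblings T r c u₀ s u₁)
    (h₂ : MeetingSiblings T r c u₁ t u₂) (h₃ : IsChild T r u₂ u₃) : LayersMeet c u₀ u₃ := by
  obtain ⟨hsu₁, hs, hu₁, hm₁⟩ := h₁
  obtain ⟨htu₂, ht, hu₂, hm₂⟩ := h₂
  rcases h4 u₀ u₁ u₂ u₃ with h | h | h | h | h | h
  · exact (hc.not_layersMeet_of_adj hu₁.adj h).elim
  · exact (hc.not_layersMeet_and_layersMeet hT.isAcyclic hs.adj.symm hu₁.adj hu₂.adj hsu₁
      (hu₁.ne_of_isChild hu₂) ⟨hm₁, h⟩).elim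
  · exact h
  · exact (hc.not_layersMeet_of_adj hu₂.adj h).elim
  · exact (hc.not_layersMeet_and_layersMeet hT.isAcyclic ht.adj.symm hu₂.adj h₃.adj htu₂
      (hu₂.ne_of_isChild h₃) ⟨hm₂, h⟩).elim
  · exact (hc.not_layersMeet_of_adj h₃.adj h).elim

end MeetingSiblings

end

theorem stmt_6_general {V α : Type*} [Fintype V] (T : SimpleGraph V) [DecidableRel T.Adj]
    (r : V) (hT : T.IsTree)
    (hroot : T.degree r = 3)
    (hinternal : ∀ v : V, v ≠ r → T.dist r v < 5 → T.degree v = 3)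
    (k : ℕ) (c : V × Fin k → α)
    (hnr : IsNonrepetitive (lexProd T (⊥ : SimpleGraph (Fin k))) c)
    (hrainbow : ∀ v : V, Function.Injective fun w : Fin k => c (v, w)) :
    ∃ S : Finset α, ↑S ⊆ Set.range c ∧ 4 * k ≤ S.card := by
  by_contra! hcard
  have h4 := layersMeetAmongFour_of_card_lt hrainbow (by simpa using hcard)
  have hdeg : ∀ {p v}, IsChild T r p v → T.dist r v < 5 → T.degree v = 3 :=
    fun hv hd => hinternal _ hv.ne_root hd
  have hr : T.dist r r = 0 := dist_self
  obtain ⟨s₁, y₁, h₁⟩ := exists_meetingSiblings_root hnr h4 hroot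
  have e₁ := h₁.isChild_right
  have d₁ := e₁.dist_eq
  obtain ⟨s₂, y₂, h₂⟩ := h₁.exists_meetingSiblings hT hnr h4 (hdeg e₁ (by omega))
  have e₂ := h₂.isChild_right
  have d₂ := e₂.dist_eq
  obtain ⟨s₃, y₃, h₃⟩ := h₂.exists_meetingSiblings hT hnr h4 (hdeg e₂ (by omega))
  have e₃ := h₃.isChild_right
  have d₃ := e₃.dist_eq
  obtain ⟨s₄, y₄, h₄⟩ := h₃.exists_meetingSiblings hT hnr h4 (hdeg e₃ (by omega))
  have e₄ := h₄.isChild_right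
  have d₄ := e₄.dist_eq
  obtain ⟨y₅, -, -, e₅, -⟩ := hT.exists_two_children e₄ (hdeg e₄ (by omega))
  exact hnr.not_layersMeet_and_layersMeet_and_layersMeet hT.isAcyclic
    e₁.adj e₂.adj e₃.adj e₄.adj e₅.adj
    (e₁.ne_of_isChild e₂) (e₂.ne_of_isChild e₃) (e₃.ne_of_isChild e₄) (e₄.ne_of_isChild e₅)
    ⟨h₁.layersMeet_of_meetingSiblings hT hnr h4 h₂ e₃,
      h₂.layersMeet_of_meetingSiblings hT hnr h4 h₃ e₄,
      h₃.layersMeet_of_meetingSiblings hT hnr h4 h₄ e₅⟩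

/-- Every rainbow nonrepetitive coloring of `T_{3,6}[E_k]` uses at least `4k` colors,
where `T_{3,6}` is the tree whose root has 3 children, every other non-leaf vertex has
degree 3, and all leaves are at distance 5 from the root. -/
theorem stmt_6 {V α : Type*} [Fintype V] (T : SimpleGraph V) [DecidableRel T.Adj]
    (r : V) (hT : T.IsTree)
    (hroot : T.degree r = 3)
    (hdepth : ∀ v : V, T.dist r v ≤ 5)
    (hinternal : ∀ v : V, v ≠ r → T.dist r v < 5 → T.degree v = 3)
    (hleaf : ∀ v : V, T.dist r v = 5 → T.degree v = 1)
    (k : ℕ) (hk : 1 ≤ k) (c : V × Fin k → α)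
    (hnr : IsNonrepetitive (lexProd T (⊥ : SimpleGraph (Fin k))) c)
    (hrainbow : ∀ v : V, Function.Injective fun w : Fin k => c (v, w)) :
    ∃ S : Finset α, ↑S ⊆ Set.range c ∧ 4 * k ≤ S.card :=
  stmt_6_general T r hT hroot hinternal k c hnr hrainbow
end
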